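/- arXiv:1901.04700 — 2 statements merged into one kernel-verified Lean document; each statement's English description precedes it below -/
import Mathlib

section
/- Let A be an m×m real symmetric positive-definite matrix and p < m. Define the Oja vector field F(X) = AX − X Xᵀ A X for X ∈ ℝ^{m×p}. If X has full column rank, then F(X) = 0 if and only if XᵀX = I_p and the column space of X is an invariant subspace of A (i.e., A X = X (XᵀAX)). -/
/-!
At a zero of `F` we have `AX = X (XᵀAX)`, and multiplying by `Xᵀ` on the left gives
`XᵀAX = (XᵀX)(XᵀAX)`. Since `X` is injective and `A` is positive definite, `XᵀAX` is positive
definite, hence invertible, and cancelling it yields `XᵀX = I`. Conversely, if `XᵀX = I` and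
`AX = XM`, then `M = XᵀAX`, so `AX = XXᵀAX`.
-/

open Matrix

namespace Matrix

theorem mulVec_injective_of_rank_eq_card {m n K : Type*} [Fintype n] [Field K]
    {X : Matrix m n K} (hX : X.rank = Fintype.card n) : Function.Injective X.mulVec := by
  have h := LinearMap.finrank_range_add_finrank_ker X.mulVecLin
  rw [← Matrix.rank, hX, Module.finrank_fintype_fun_eq_card, add_eq_left,
    Submodule.finrank_eq_zero, LinearMap.ker_eq_bot] at h
  exact h

theorem mul_eq_mul_transpose_mul_mul_iff {m n R : Type*} [Fintype m] [Fintype n]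
    [DecidableEq n] [Semiring R] {A : Matrix m m R} {X : Matrix m n R}
    (hB : IsUnit (Xᵀ * A * X)) :
    A * X = X * Xᵀ * A * X ↔ Xᵀ * X = 1 ∧ ∃ M : Matrix n n R, A * X = X * M := by
  constructor
  · intro h
    have hAX : A * X = X * (Xᵀ * A * X) := by rw [h]; simp only [Matrix.mul_assoc]
    have hB_eq : Xᵀ * X * (Xᵀ * A * X) = 1 * (Xᵀ * A * X) := by
      rw [Matrix.mul_assoc, ← hAX, one_mul, Matrix.mul_assoc]
    exact ⟨hB.mul_right_cancel hB_eq, _, hAX⟩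
  · rintro ⟨hXX, M, hM⟩
    have hM_eq : Xᵀ * A * X = M := by
      rw [Matrix.mul_assoc, hM, ← Matrix.mul_assoc, hXX, one_mul]
    rw [Matrix.mul_assoc X, Matrix.mul_assoc, hM_eq, hM]

end Matrix

theorem oja_zero_iff_general (m p : ℕ)
    (A : Matrix (Fin m) (Fin m) ℝ) (hApd : A.PosDef)
    (X : Matrix (Fin m) (Fin p) ℝ) (hX : X.rank = p) :
    A * X - X * Xᵀ * A * X = 0 ↔
      (Xᵀ * X = 1 ∧ ∃ M : Matrix (Fin p) (Fin p) ℝ, A * X = X * M) := by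
  have hX_inj : Function.Injective X.mulVec :=
    mulVec_injective_of_rank_eq_card (by rw [hX, Fintype.card_fin])
  have hB : (Xᵀ * A * X).PosDef := by
    simpa only [conjTranspose_eq_transpose_of_trivial] using
      hApd.conjTranspose_mul_mul_same hX_inj
  rw [sub_eq_zero]
  exact mul_eq_mul_transpose_mul_mul_iff hB.isUnit

/-- Oja vector field zero characterization: for `A` symmetric positive-definite,
`p < m`, and `X` of full column rank, `AX - XXᵀAX = 0` iff `X` is orthonormal and
the column space of `X` is invariant under `A`. -/
theorem oja_zero_iff (m p : ℕ) (hp : 0 < p) (hpm : p < m)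
    (A : Matrix (Fin m) (Fin m) ℝ) (hA : A.IsSymm) (hApd : A.PosDef)
    (X : Matrix (Fin m) (Fin p) ℝ) (hX : X.rank = p) :
    A * X - X * Xᵀ * A * X = 0 ↔
      (Xᵀ * X = 1 ∧ ∃ M : Matrix (Fin p) (Fin p) ℝ, A * X = X * M) :=
  oja_zero_iff_general m p A hApd X hX
end

section
/- Let (f_k)_{k≥0} be a sequence of nonnegative reals, (δ_k)_{k≥0} a nonnegative sequence with Σδ_k = δ < ∞, and define Γ_0 = f_0, Φ_0 = 1, and for λ_k ∈ [0,1]: Φ_{k+1} = λ_k Φ_k + 1 and Γ_{k+1} = (λ_k Φ_k (Γ_k + δ_k) + f_{k+1}) / Φ_{k+1}. If f_{k+1} ≤ Γ_k + δ_k for all k, then f_k ≤ Γ_k for all k ≥ 0 and Γ_{k+1} ≤ Γ_k + δ_k for all k ≥ 0; in particular Γ_k ≤ f_0 + δ for all k. -/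
/-- Properties of the non-monotone line search averaging sequences `Γ_k`, `Φ_k`:
if `f_{k+1} ≤ Γ_k + δ_k` for all `k`, then `f_k ≤ Γ_k`, `Γ_{k+1} ≤ Γ_k + δ_k`, and
`Γ_k ≤ f_0 + δ` for all `k`. -/
theorem nonmonotone_averaging (f δ lam Γ Φ : ℕ → ℝ) (δ' : ℝ)
    (hf : ∀ k, 0 ≤ f k) (hδ : ∀ k, 0 ≤ δ k)
    (hδsum : HasSum δ δ')
    (hlam : ∀ k, lam k ∈ Set.Icc (0 : ℝ) 1)
    (hΓ0 : Γ 0 = f 0) (hΦ0 : Φ 0 = 1)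
    (hΦ : ∀ k, Φ (k + 1) = lam k * Φ k + 1)
    (hΓ : ∀ k, Γ (k + 1) = (lam k * Φ k * (Γ k + δ k) + f (k + 1)) / Φ (k + 1))
    (hacc : ∀ k, f (k + 1) ≤ Γ k + δ k) :
    (∀ k, f k ≤ Γ k) ∧ (∀ k, Γ (k + 1) ≤ Γ k + δ k) ∧ (∀ k, Γ k ≤ f 0 + δ') := by
  have hΦ1 : ∀ k, 1 ≤ Φ k := by
    intro k
    induction k with
    | zero => rw [hΦ0]
    | succ n ih =>
      rw [hΦ n]
      have h0 := (hlam n).1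
      nlinarith
  have hΦpos : ∀ k, 0 < Φ (k + 1) := fun k => lt_of_lt_of_le one_pos (hΦ1 (k+1))
  have hlamΦ : ∀ k, 0 ≤ lam k * Φ k := fun k =>
    mul_nonneg (hlam k).1 (le_trans zero_le_one (hΦ1 k))
  have hstep : ∀ k, Γ (k + 1) ≤ Γ k + δ k := by
    intro k
    rw [hΓ k, div_le_iff₀ (hΦpos k), hΦ k]
    have := hacc k
    nlinarith [hlamΦ k]
  have hfΓ : ∀ k, f k ≤ Γ k := by
    intro k
    cases k with
    | zero => rw [hΓ0]
    | succ n =>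
      rw [hΓ n, le_div_iff₀ (hΦpos n), hΦ n]
      have := hacc n
      nlinarith [hlamΦ n]
  refine ⟨hfΓ, hstep, ?_⟩
  have hpart : ∀ k, Γ k ≤ f 0 + ∑ i ∈ Finset.range k, δ i := by
    intro k
    induction k with
    | zero => simp [hΓ0]
    | succ n ih =>
      rw [Finset.sum_range_succ]
      have := hstep n
      linarith
  intro k
  have hsum : ∑ i ∈ Finset.range k, δ i ≤ δ' :=
    sum_le_hasSum _ (fun i _ => hδ i) hδsum
  have := hpart k
  linarith
end
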